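/- Let φₙ be the Hermite functions and define, for n, n' ∈ ℕ, s, s' ∈ ℝ and ε > 0, the kernel sum S = Σ_{n=0}^∞ (φₙφ₀)^∧(ξ) conj((φₙφ₀)^∧(ξ')) e^{-i(n+1/2)(s'-s)/ε}. Then S = (2π)^{-1} ⟨e^{-iξ'·}φ₀, U((s'-s)/ε) e^{-iξ·}φ₀⟩, where U is the harmonic oscillator propagator; in particular |S| ≤ (2π)^{-1} for all ξ, ξ', s, s', ε. -/

import Mathlib

open MeasureTheory ComplexConjugate

/-! The Fourier coefficients `(φₙφ₀)^∧(ξ)` are, up to `(2π)^{-1/2}`, the coordinates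
`⟨φₙ, e^{-iξ·}φ₀⟩` of the modulated ground state in the Hermite basis. Since `U(t)` acts on
`φₙ` by the phase `e^{-i(n+1/2)t}`, the kernel sum is Parseval's identity for the pair
`e^{-iξ'·}φ₀`, `U(t) e^{-iξ·}φ₀`; the bound is Cauchy–Schwarz, modulation and `U(t)` being
isometries. -/

/-- The physicists' Hermite functions (orthonormal eigenfunctions of
`h = -(1/2)Δ + (1/2)y²` with eigenvalue `n+1/2`). -/
noncomputable def hermiteFun (n : ℕ) (y : ℝ) : ℝ :=
  ((2:ℝ) ^ n * n.factorial * Real.sqrt Real.pi) ^ (-(1:ℝ)/2) * (2:ℝ) ^ ((n:ℝ)/2) *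
    (Polynomial.aeval (Real.sqrt 2 * y) (Polynomial.hermite n)) * Real.exp (-(y^2)/2)

/-- The Fourier transform `f̂(ξ) = (2π)^{-1/2} ∫ f(y) e^{-iyξ} dy`. -/
noncomputable def ft (f : ℝ → ℂ) (ξ : ℝ) : ℂ :=
  ((Real.sqrt (2 * Real.pi) : ℂ))⁻¹ * ∫ y : ℝ, Complex.exp (-Complex.I * ξ * y) * f y

section Eigenvector

variable {𝕜 E : Type*} [RCLike 𝕜] [NormedAddCommGroup E] [InnerProductSpace 𝕜 E]

theorem inner_apply_of_isometry_of_eigenvector (T : E →L[𝕜] E) (hT : ∀ x, ‖T x‖ = ‖x‖)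
    {v : E} {μ : 𝕜} (hv : T v = μ • v) (g : E) :
    inner 𝕜 v (T g) = μ * inner 𝕜 v g := by
  have hinner : ∀ x y, inner 𝕜 (T x) (T y) = inner 𝕜 x y :=
    (⟨T.toLinearMap, hT⟩ : E →ₗᵢ[𝕜] E).inner_map_map
  rcases eq_or_ne v 0 with rfl | hv0
  · simp
  have hμ : μ * conj μ = 1 := by
    have hvv := hinner v v
    rw [hv, inner_smul_left, inner_smul_right, ← mul_assoc, mul_comm (conj μ)] at hvv
    exact mul_right_cancel₀ (inner_self_ne_zero.mpr hv0) (hvv.trans (one_mul _).symm)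
  calc inner 𝕜 v (T g) = μ * (conj μ * inner 𝕜 v (T g)) := by rw [← mul_assoc, hμ, one_mul]
    _ = μ * inner 𝕜 v g := by rw [← inner_smul_left, ← hv, hinner]

theorem HilbertBasis.hasSum_inner_isometry_of_eigenbasis {ι : Type*} (b : HilbertBasis ι 𝕜 E)
    (T : E →L[𝕜] E) (hT : ∀ x, ‖T x‖ = ‖x‖) (μ : ι → 𝕜) (hTb : ∀ i, T (b i) = μ i • b i)
    (g g' : E) :
    HasSum (fun i => inner 𝕜 (b i) g * conj (inner 𝕜 (b i) g') * μ i) (inner 𝕜 g' (T g)) := by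
  refine (b.hasSum_inner_mul_inner g' (T g)).congr_fun fun i => ?_
  rw [inner_apply_of_isometry_of_eigenvector T hT (hTb i), inner_conj_symm]
  ring

end Eigenvector

theorem Lp.norm_eq_of_ae_norm_eq {α E : Type*} [MeasurableSpace α] {μ : Measure α}
    [NormedAddCommGroup E] {p : ENNReal} {f g : Lp E p μ} (h : ∀ᵐ x ∂μ, ‖f x‖ = ‖g x‖) :
    ‖f‖ = ‖g‖ := by
  rw [Lp.norm_def, Lp.norm_def, eLpNorm_congr_norm_ae h]

theorem norm_cexp_neg_I_mul_ofReal_mul (a b : ℝ) :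
    ‖Complex.exp (-Complex.I * a * b)‖ = 1 := by
  simp [Complex.norm_exp]

theorem ft_mul_eq_inner {u v w : Lp ℂ 2 (volume : Measure ℝ)} {a : ℝ → ℝ} {b : ℝ → ℂ} (c : ℝ)
    (hu : (u : ℝ → ℂ) =ᵐ[volume] fun y => (a y : ℂ)) (hv : (v : ℝ → ℂ) =ᵐ[volume] b)
    (hw : (w : ℝ → ℂ) =ᵐ[volume] fun y => Complex.exp (-Complex.I * c * y) * v y) :
    ft (fun y => (a y : ℂ) * b y) c = ((Real.sqrt (2 * Real.pi) : ℂ))⁻¹ * inner ℂ u w := by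
  rw [ft, L2.inner_def]
  congr 1
  refine (integral_congr_ae ?_).symm
  filter_upwards [hu, hv, hw] with y hu hv hw
  rw [RCLike.inner_apply, hu, hw, hv, Complex.conj_ofReal]
  ring

theorem kernel_sum_propagator_general (ε s s' ξ ξ' : ℝ)
    (φ : ℕ → Lp ℂ 2 (volume : Measure ℝ))
    (hφ : ∀ n, (φ n : ℝ → ℂ) =ᵐ[volume] fun y => (hermiteFun n y : ℂ))
    (hON : Orthonormal ℂ φ)
    (hTot : (Submodule.span ℂ (Set.range φ)).topologicalClosure = ⊤)
    (U : ℝ → Lp ℂ 2 (volume : Measure ℝ) →L[ℂ] Lp ℂ 2 (volume : Measure ℝ))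
    (hUiso : ∀ t f, ‖U t f‖ = ‖f‖)
    (hU : ∀ (t : ℝ) (n : ℕ), U t (φ n) = Complex.exp (-Complex.I * ((n:ℂ) + 1/2) * t) • φ n)
    (M : ℝ → Lp ℂ 2 (volume : Measure ℝ) →L[ℂ] Lp ℂ 2 (volume : Measure ℝ))
    (hM : ∀ (c : ℝ) (f : Lp ℂ 2 (volume : Measure ℝ)),
      (M c f : ℝ → ℂ) =ᵐ[volume] fun y => Complex.exp (-Complex.I * c * y) * f y) :
    HasSum (fun n : ℕ =>
        ft (fun y => (hermiteFun n y : ℂ) * (hermiteFun 0 y : ℂ)) ξ *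
          (starRingEnd ℂ) (ft (fun y => (hermiteFun n y : ℂ) * (hermiteFun 0 y : ℂ)) ξ') *
          Complex.exp (-Complex.I * ((n:ℂ) + 1/2) * (((s' - s) / ε : ℝ) : ℂ)))
      (((2 * Real.pi : ℝ) : ℂ)⁻¹ *
        (inner ℂ (M ξ' (φ 0)) (U ((s' - s) / ε) (M ξ (φ 0))) : ℂ)) ∧
    ‖((2 * Real.pi : ℝ) : ℂ)⁻¹ *
        (inner ℂ (M ξ' (φ 0)) (U ((s' - s) / ε) (M ξ (φ 0))) : ℂ)‖ ≤ (2 * Real.pi)⁻¹ := by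
  set t : ℝ := (s' - s) / ε
  have hft (n : ℕ) (c : ℝ) := ft_mul_eq_inner c (hφ n) (hφ 0) (hM c (φ 0))
  have hMnorm (c : ℝ) : ‖M c (φ 0)‖ = 1 := by
    rw [← hON.1 0]
    refine Lp.norm_eq_of_ae_norm_eq ?_
    filter_upwards [hM c (φ 0)] with y hy
    rw [hy, norm_mul, norm_cexp_neg_I_mul_ofReal_mul, one_mul]
  have hsqrt : ((Real.sqrt (2 * Real.pi) : ℂ))⁻¹ * ((Real.sqrt (2 * Real.pi) : ℂ))⁻¹
      = ((2 * Real.pi : ℝ) : ℂ)⁻¹ := by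
    rw [← mul_inv, ← Complex.ofReal_mul, Real.mul_self_sqrt (by positivity)]
  let b := HilbertBasis.mk hON hTot.ge
  have hb : ⇑b = φ := HilbertBasis.coe_mk hON hTot.ge
  have hParseval := b.hasSum_inner_isometry_of_eigenbasis (U t) (hUiso t) _
    (fun n => by rw [hb]; exact hU t n) (M ξ (φ 0)) (M ξ' (φ 0))
  refine ⟨(hParseval.mul_left _).congr_fun fun n => ?_, ?_⟩
  · rw [hft n ξ, hft n ξ', hb, map_mul, map_inv₀, Complex.conj_ofReal, ← hsqrt]
    ring
  · calc ‖((2 * Real.pi : ℝ) : ℂ)⁻¹ * inner ℂ (M ξ' (φ 0)) (U t (M ξ (φ 0)))‖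
        ≤ (2 * Real.pi)⁻¹ * (‖M ξ' (φ 0)‖ * ‖U t (M ξ (φ 0))‖) := by
          rw [norm_mul, norm_inv, Complex.norm_real, Real.norm_of_nonneg (by positivity)]
          gcongr
          exact norm_inner_le_norm _ _
      _ = (2 * Real.pi)⁻¹ := by rw [hUiso, hMnorm, hMnorm, mul_one, mul_one]

/-- The kernel sum
`S = Σₙ (φₙφ₀)^∧(ξ) conj((φₙφ₀)^∧(ξ')) e^{-i(n+1/2)(s'-s)/ε}` converges and equals
`(2π)⁻¹ ⟨e^{-iξ'·}φ₀, U((s'-s)/ε) e^{-iξ·}φ₀⟩`, where `U` is the harmonic oscillator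
propagator; in particular `|S| ≤ (2π)⁻¹`. -/
theorem kernel_sum_propagator (ε s s' ξ ξ' : ℝ) (hε : 0 < ε)
    (φ : ℕ → Lp ℂ 2 (volume : Measure ℝ))
    (hφ : ∀ n, (φ n : ℝ → ℂ) =ᵐ[volume] fun y => (hermiteFun n y : ℂ))
    (hON : Orthonormal ℂ φ)
    (hTot : (Submodule.span ℂ (Set.range φ)).topologicalClosure = ⊤)
    (U : ℝ → Lp ℂ 2 (volume : Measure ℝ) →L[ℂ] Lp ℂ 2 (volume : Measure ℝ))
    (hUiso : ∀ t f, ‖U t f‖ = ‖f‖)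
    (hU : ∀ (t : ℝ) (n : ℕ), U t (φ n) = Complex.exp (-Complex.I * ((n:ℂ) + 1/2) * t) • φ n)
    (M : ℝ → Lp ℂ 2 (volume : Measure ℝ) →L[ℂ] Lp ℂ 2 (volume : Measure ℝ))
    (hM : ∀ (c : ℝ) (f : Lp ℂ 2 (volume : Measure ℝ)),
      (M c f : ℝ → ℂ) =ᵐ[volume] fun y => Complex.exp (-Complex.I * c * y) * f y) :
    HasSum (fun n : ℕ =>
        ft (fun y => (hermiteFun n y : ℂ) * (hermiteFun 0 y : ℂ)) ξ *
          (starRingEnd ℂ) (ft (fun y => (hermiteFun n y : ℂ) * (hermiteFun 0 y : ℂ)) ξ') *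
          Complex.exp (-Complex.I * ((n:ℂ) + 1/2) * (((s' - s) / ε : ℝ) : ℂ)))
      (((2 * Real.pi : ℝ) : ℂ)⁻¹ *
        (inner ℂ (M ξ' (φ 0)) (U ((s' - s) / ε) (M ξ (φ 0))) : ℂ)) ∧
    ‖((2 * Real.pi : ℝ) : ℂ)⁻¹ *
        (inner ℂ (M ξ' (φ 0)) (U ((s' - s) / ε) (M ξ (φ 0))) : ℂ)‖ ≤ (2 * Real.pi)⁻¹ :=
  kernel_sum_propagator_general ε s s' ξ ξ' φ hφ hON hTot U hUiso hU M hM
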